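/- arXiv:1401.6976 — 2 statements merged into one kernel-verified Lean document; each statement's English description precedes it below -/
import Mathlib

section
/- Let c ∈ (0, c_crit). Suppose h : J → ℝ is a solution of the transformed Jang equation on an interval J containing 0, with h(0) = 0, and suppose |h(s*)| = 1 for some s* ∈ J. Then there is no solution f : ℝ → ℝ of Jang's equation on L_c defined on all of ℝ with f(-c/2) = f'(-c/2) = 0; that is, the maximal solution f_c of Jang's equation with these initial conditions is not global. -/
/-- The function `φ(r) = e^{r/(2m)-1}(r - 2m)` defining the Kruskal radius implicitly. -/
noncomputable def phi (m r : ℝ) : ℝ := Real.exp (r / (2*m) - 1) * (r - 2*m)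

/-- The derivative `φ_r(r) = (r/(2m)) e^{r/(2m)-1}`. -/
noncomputable def phiR (m r : ℝ) : ℝ := (r / (2*m)) * Real.exp (r / (2*m) - 1)

/-- The critical parameter `c_crit = √(8m/e)`. -/
noncomputable def cCrit (m : ℝ) : ℝ := Real.sqrt (8*m / Real.exp 1)

/-- The right-hand side of Jang's equation on the slice `L_c`:
`f''(u) = jangRHS m c u r (f'(u))` where `r = r(u)` solves `φ(r) = u(u+c)`. -/
noncomputable def jangRHS (m c u r p : ℝ) : ℝ :=
  c * Real.sqrt (2*m / phiR m r + p^2/4) *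
      ((1 / phiR m r) * (1/(2*m) - 3/r) - p^2/(2*m*r))
    - ((2*u + c)/(4*m*r)) * p^3
    - ((2*u + c)/(2 * phiR m r)) * (1/(2*m) + 5/r) * p

/-- The right-hand side `F_c(s,h)` of the transformed Jang equation,
with `r = r_c(s)` solving `φ(r) = (c²/4)(s²-1)`. -/
noncomputable def Fc (m c s r h : ℝ) : ℝ :=
  (c^2/2) * Real.sqrt (2*m*(1 - h^2) / phiR m r + h^2/4) *
      (((1 - h^2) / phiR m r) * (1/(2*m) - 3/r) - h^2/(2*m*r))
    - (c^2*s/(8*m*r)) * h^3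
    - (c^2*s/(4 * phiR m r)) * (1/(2*m) + 5/r) * (h*(1 - h^2))

/-!
Pulling a global Jang solution back along `p ↦ p/√(1+p²)` and `u = c(s-1)/2` gives a global
solution `q` of the transformed equation with `q 0 = 0` and `|q| < 1` everywhere. Where `r > 0` and
`|h| ≤ 1` the radicand of `Fc` stays positive, so `Fc` is `C¹` there and hence Lipschitz in `h`
uniformly for `s` in a compact interval. By uniqueness `h` agrees with `q` up to the first time
`|h|` reaches `1`, which is impossible since `|q| < 1`.
-/

open Set Real Topology

section FirstExit

variable {E : Type*} [NormedAddCommGroup E] [NormedSpace ℝ E] {v : ℝ → E → E} {K : NNReal}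
  {f g : ℝ → E} {U : Set E} {a b : ℝ}

lemma ODE_solution_mem_of_isOpen_Icc (hU : IsOpen U) (hab : a ≤ b)
    (hv : ∀ t ∈ Icc a b, LipschitzOnWith K (v t) U)
    (hf : ∀ t ∈ Icc a b, HasDerivWithinAt f (v t (f t)) (Icc a b) t)
    (hg : ∀ t ∈ Icc a b, HasDerivWithinAt g (v t (g t)) (Icc a b) t)
    (hgU : ∀ t ∈ Icc a b, g t ∈ U) (ha : f a = g a) : f b ∈ U := by
  by_contra hb
  have hfc : ContinuousOn f (Icc a b) := fun t ht => (hf t ht).continuousWithinAt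
  have hgc : ContinuousOn g (Icc a b) := fun t ht => (hg t ht).continuousWithinAt
  -- `T` is the first exit time of `f` from `U`.
  set S := Icc a b ∩ f ⁻¹' Uᶜ
  have hSbdd : BddBelow S := ⟨a, fun t ht => ht.1.1⟩
  have hT : sInf S ∈ S :=
    (hfc.preimage_isClosed_of_isClosed isClosed_Icc hU.isClosed_compl).csInf_mem
      ⟨b, ⟨hab, le_rfl⟩, hb⟩ hSbdd
  set T := sInf S
  have hTb : Icc a T ⊆ Icc a b := Icc_subset_Icc_right hT.1.2
  have hfU : ∀ t ∈ Ico a T, f t ∈ U := fun t ht => by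
    by_contra hft
    exact (csInf_le hSbdd ⟨hTb (Ico_subset_Icc_self ht), hft⟩).not_gt ht.2
  have hderiv : ∀ {u : ℝ → E}, (∀ t ∈ Icc a b, HasDerivWithinAt u (v t (u t)) (Icc a b) t) →
      ∀ t ∈ Ico a T, HasDerivWithinAt u (v t (u t)) (Ici t) t := fun hu t ht =>
    (hu t (hTb (Ico_subset_Icc_self ht))).mono_of_mem_nhdsWithin
      (Icc_mem_nhdsGE_of_mem ⟨ht.1, ht.2.trans_le hT.1.2⟩)
  have hfgT : f T = g T :=
    ODE_solution_unique_of_mem_Icc_right (s := fun _ => U)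
      (fun t ht => hv t (hTb (Ico_subset_Icc_self ht))) (hfc.mono hTb) (hderiv hf) hfU
      (hgc.mono hTb) (hderiv hg) (fun t ht => hgU t (hTb (Ico_subset_Icc_self ht))) ha
      ⟨hT.1.1, le_rfl⟩
  exact hT.2 (hfgT ▸ hgU T hT.1)

lemma ODE_solution_mem_of_isOpen_uIcc (hU : IsOpen U)
    (hv : ∀ t ∈ uIcc a b, LipschitzOnWith K (v t) U)
    (hf : ∀ t ∈ uIcc a b, HasDerivWithinAt f (v t (f t)) (uIcc a b) t)
    (hg : ∀ t ∈ uIcc a b, HasDerivWithinAt g (v t (g t)) (uIcc a b) t)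
    (hgU : ∀ t ∈ uIcc a b, g t ∈ U) (ha : f a = g a) : f b ∈ U := by
  rcases le_total a b with hab | hba
  · rw [uIcc_of_le hab] at hv hf hg hgU
    exact ODE_solution_mem_of_isOpen_Icc hU hab hv hf hg hgU ha
  -- Reverse time: `t ↦ u (-t)` solves `x' = -v (-t) x` on `Icc (-a) (-b)`.
  rw [uIcc_of_ge hba] at hv hf hg hgU
  have hneg : MapsTo Neg.neg (Icc (-a) (-b)) (Icc b a) :=
    fun t ht => ⟨le_neg.mp ht.2, neg_le.mp ht.1⟩
  have hreverse : ∀ {u : ℝ → E}, (∀ t ∈ Icc b a, HasDerivWithinAt u (v t (u t)) (Icc b a) t) →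
      ∀ t ∈ Icc (-a) (-b),
        HasDerivWithinAt (u ∘ Neg.neg) (-v (-t) ((u ∘ Neg.neg) t)) (Icc (-a) (-b)) t :=
    fun hu t ht => by
      simpa using (hu (-t) (hneg ht)).scomp t (hasDerivAt_neg t).hasDerivWithinAt hneg
  simpa using ODE_solution_mem_of_isOpen_Icc (v := fun t x => -v (-t) x) (K := 1 * K) hU
    (neg_le_neg hba) (fun t ht => LipschitzWith.id.neg.comp_lipschitzOnWith (hv _ (hneg ht)))
    (hreverse hf) (hreverse hg) (fun t ht => hgU _ (hneg ht)) (by simpa using ha)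

end FirstExit

lemma phiR_pos {m r : ℝ} (hm : 0 < m) (hr : 0 < r) : 0 < phiR m r := by
  unfold phiR; positivity

lemma hasDerivAt_phi {m : ℝ} (hm : m ≠ 0) (r : ℝ) : HasDerivAt (phi m) (phiR m r) r := by
  have hexp : HasDerivAt (fun r => exp (r / (2*m) - 1)) (exp (r / (2*m) - 1) * (1 / (2*m))) r :=
    (((hasDerivAt_id' r).div_const _).sub_const 1).exp.congr_deriv (by simp)
  refine (hexp.mul ((hasDerivAt_id' r).sub_const (2*m))).congr_deriv ?_
  unfold phiR
  field_simp
  ring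

lemma strictMonoOn_phi {m : ℝ} (hm : 0 < m) : StrictMonoOn (phi m) (Ioi 0) :=
  strictMonoOn_of_hasDerivWithinAt_pos (convex_Ioi 0)
    (fun r _ => (hasDerivAt_phi hm.ne' r).continuousAt.continuousWithinAt)
    (fun r _ => (hasDerivAt_phi hm.ne' r).hasDerivWithinAt)
    (fun r hr => phiR_pos hm (by rwa [interior_Ioi] at hr))

lemma Fc_radicand_pos {m r x : ℝ} (hm : 0 < m) (hr : 0 < r) (hx : x ∈ Icc (-1) 1) :
    0 < 2*m*(1 - x^2) / phiR m r + x^2/4 := by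
  have hx2 : x^2 ≤ 1 := sq_le_one_iff_abs_le_one x |>.mpr (abs_le.mpr hx)
  rcases hx2.lt_or_eq with hlt | heq
  · have : 0 < 2*m*(1 - x^2) / phiR m r := div_pos (by nlinarith) (phiR_pos hm hr)
    positivity
  · rw [heq]; norm_num

lemma contDiffAt_Fc {m : ℝ} (hm : 0 < m) (c : ℝ) {x : ℝ × ℝ × ℝ} (hr : 0 < x.2.1)
    (hrad : 0 < 2*m*(1 - x.2.2^2) / phiR m x.2.1 + x.2.2^2/4) :
    ContDiffAt ℝ 1 (fun x : ℝ × ℝ × ℝ => Fc m c x.1 x.2.1 x.2.2) x := by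
  have hφ : phiR m x.2.1 ≠ 0 := (phiR_pos hm hr).ne'
  unfold Fc phiR at *
  fun_prop (disch := first | positivity | exact hrad.ne' | exact hφ)

lemma exists_lipschitzOnWith_Fc {m : ℝ} (hm : 0 < m) (c : ℝ) {a b r₁ r₂ : ℝ} (hr₁ : 0 < r₁) :
    ∃ K, ∀ s ∈ Icc a b, ∀ r ∈ Icc r₁ r₂, LipschitzOnWith K (Fc m c s r) (Icc (-1) 1) := by
  set B := Icc a b ×ˢ Icc r₁ r₂ ×ˢ Icc (-1 : ℝ) 1
  have hB : ContDiffOn ℝ 1 (fun x : ℝ × ℝ × ℝ => Fc m c x.1 x.2.1 x.2.2) B := fun x hx =>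
    have hr : 0 < x.2.1 := hr₁.trans_le hx.2.1.1
    (contDiffAt_Fc hm c hr (Fc_radicand_pos hm hr hx.2.2)).contDiffWithinAt
  obtain ⟨K, hK⟩ := hB.exists_lipschitzOnWith one_ne_zero
    ((convex_Icc _ _).prod ((convex_Icc _ _).prod (convex_Icc _ _)))
    (isCompact_Icc.prod (isCompact_Icc.prod isCompact_Icc))
  refine ⟨K, fun s hs r hr x hx y hy => ?_⟩
  have := hK (⟨hs, hr, hx⟩ : (s, r, x) ∈ B) (⟨hs, hr, hy⟩ : (s, r, y) ∈ B)
  simpa only [Prod.edist_eq, edist_self, zero_le, max_eq_right] using this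

lemma Rc_le_Rc_of_sq_le {m c : ℝ} (hm : 0 < m) {Rc : ℝ → ℝ}
    (hRc : ∀ s, 0 < Rc s ∧ phi m (Rc s) = c^2/4 * (s^2 - 1)) {s t : ℝ} (hst : s^2 ≤ t^2) :
    Rc s ≤ Rc t := by
  rw [← (strictMonoOn_phi hm).le_iff_le (hRc s).1 (hRc t).1, (hRc s).2, (hRc t).2]
  gcongr

lemma exists_lipschitzOnWith_Fc_Rc {m c : ℝ} (hm : 0 < m) {Rc : ℝ → ℝ}
    (hRc : ∀ s, 0 < Rc s ∧ phi m (Rc s) = c^2/4 * (s^2 - 1)) (σ : ℝ) :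
    ∃ K, ∀ s ∈ uIcc 0 σ, LipschitzOnWith K (Fc m c s (Rc s)) (Icc (-1) 1) := by
  obtain ⟨K, hK⟩ := exists_lipschitzOnWith_Fc hm c (a := min 0 σ) (b := max 0 σ) (r₂ := Rc σ)
    (hRc 0).1
  refine ⟨K, fun s hs => hK s hs (Rc s) ⟨Rc_le_Rc_of_sq_le hm hRc ?_, Rc_le_Rc_of_sq_le hm hRc ?_⟩⟩
  · simpa using sq_nonneg s
  · simpa [sq_le_sq] using abs_sub_left_of_mem_uIcc hs

lemma hasDerivAt_div_sqrt_one_add_sq (x : ℝ) :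
    HasDerivAt (fun x => x / √(1 + x^2)) (1 / ((1 + x^2) * √(1 + x^2))) x := by
  have h0 : 0 < 1 + x^2 := by positivity
  have hsq : √(1 + x^2)^2 = 1 + x^2 := sq_sqrt h0.le
  refine ((hasDerivAt_id' x).div (((hasDerivAt_pow 2 x).const_add 1).sqrt h0.ne')
    (sqrt_pos.2 h0).ne').congr_deriv ?_
  field_simp
  linear_combination (2*x^2) * hsq

lemma abs_div_sqrt_one_add_sq_lt_one (x : ℝ) : |x / √(1 + x^2)| < 1 := by
  have h0 : 0 < √(1 + x^2) := sqrt_pos.2 (by positivity)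
  rw [abs_div, abs_of_pos h0, div_lt_one h0, lt_sqrt (abs_nonneg x), sq_abs]
  linarith

/-- The factor is the chain-rule factor of `h = p/√(1+p²)` and `u = c(s-1)/2`. -/
lemma Fc_div_sqrt_one_add_sq {m r : ℝ} (hm : 0 < m) (hr : 0 < r) (c s p : ℝ) :
    Fc m c s r (p / √(1 + p^2)) =
      (c/2) * jangRHS m c (c*(s-1)/2) r p / ((1 + p^2) * √(1 + p^2)) := by
  have hφ : 0 < phiR m r := phiR_pos hm hr
  have hp : 0 < 1 + p^2 := by positivity
  have hQ : 0 < √(1 + p^2) := sqrt_pos.2 hp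
  have hQ2 : √(1 + p^2)^2 = 1 + p^2 := sq_sqrt hp.le
  have hrad : 2*m*(1 - (p / √(1 + p^2))^2) / phiR m r + (p / √(1 + p^2))^2/4
      = (2*m/phiR m r + p^2/4) / (1 + p^2) := by
    rw [div_pow, hQ2]
    field_simp
    ring
  unfold Fc jangRHS
  rw [hrad, sqrt_div (by positivity), div_pow, hQ2]
  field_simp
  linear_combination (32*c^2*p^3*phiR m r*s) * hQ2

lemma R_eq_Rc {m c : ℝ} (hm : 0 < m) {R Rc : ℝ → ℝ}
    (hR : ∀ u, 0 < R u ∧ phi m (R u) = u * (u + c))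
    (hRc : ∀ s, 0 < Rc s ∧ phi m (Rc s) = c^2/4 * (s^2 - 1)) (s : ℝ) : R (c*(s-1)/2) = Rc s :=
  (strictMonoOn_phi hm).injOn (hR _).1 (hRc s).1 (by rw [(hR _).2, (hRc s).2]; ring)

lemma hasDerivAt_transformed_jang {m c : ℝ} (hm : 0 < m) {R Rc : ℝ → ℝ}
    (hR : ∀ u, 0 < R u ∧ phi m (R u) = u * (u + c))
    (hRc : ∀ s, 0 < Rc s ∧ phi m (Rc s) = c^2/4 * (s^2 - 1)) {f' : ℝ → ℝ}
    (hf' : ∀ u, HasDerivAt f' (jangRHS m c u (R u) (f' u)) u) (s : ℝ) :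
    HasDerivAt (fun s => f' (c*(s-1)/2) / √(1 + f' (c*(s-1)/2)^2))
      (Fc m c s (Rc s) (f' (c*(s-1)/2) / √(1 + f' (c*(s-1)/2)^2))) s := by
  have hγ : HasDerivAt (fun s : ℝ => c*(s-1)/2) (c/2) s := by
    simpa using (((hasDerivAt_id' s).sub_const 1).const_mul c).div_const 2
  refine ((hasDerivAt_div_sqrt_one_add_sq _).comp s ((hf' _).comp s hγ)).congr_deriv ?_
  rw [Function.comp_apply, Fc_div_sqrt_one_add_sq hm (hRc s).1, R_eq_Rc hm hR hRc]
  ring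

theorem transformed_blowup_implies_not_global_general (m c : ℝ) (hm : 0 < m)
    (R Rc : ℝ → ℝ)
    (hR : ∀ u, 0 < R u ∧ phi m (R u) = u * (u + c))
    (hRc : ∀ s, 0 < Rc s ∧ phi m (Rc s) = c^2/4 * (s^2 - 1))
    (J : Set ℝ) (hJconn : J.OrdConnected) (h0mem : (0:ℝ) ∈ J)
    (h : ℝ → ℝ)
    (hsol : ∀ s ∈ J, HasDerivWithinAt h (Fc m c s (Rc s) (h s)) J s)
    (hinit : h 0 = 0)
    (hstar : ∃ s' ∈ J, |h s'| = 1) :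
    ¬ ∃ (f f' : ℝ → ℝ),
        (∀ u, HasDerivAt f (f' u) u) ∧
        (∀ u, HasDerivAt f' (jangRHS m c u (R u) (f' u)) u) ∧
        f (-c/2) = 0 ∧ f' (-c/2) = 0 := by
  rintro ⟨f, f', -, hf', -, hf'0⟩
  obtain ⟨σ, hσJ, hσ⟩ := hstar
  set q := fun s => f' (c*(s-1)/2) / √(1 + f' (c*(s-1)/2)^2)
  have hq0 : q 0 = 0 := by simp [q, hf'0]
  obtain ⟨K, hK⟩ := exists_lipschitzOnWith_Fc_Rc hm hRc σ
  have hJσ : uIcc 0 σ ⊆ J := hJconn.uIcc_subset h0mem hσJ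
  have hhσ : h σ ∈ Ioo (-1) 1 :=
    ODE_solution_mem_of_isOpen_uIcc isOpen_Ioo (fun s hs => (hK s hs).mono Ioo_subset_Icc_self)
      (fun s hs => (hsol s (hJσ hs)).mono hJσ)
      (fun s _ => (hasDerivAt_transformed_jang hm hR hRc hf' s).hasDerivWithinAt)
      (fun s _ => abs_lt.mp (abs_div_sqrt_one_add_sq_lt_one _)) (hinit.trans hq0.symm)
  exact (abs_lt.mpr hhσ).ne hσ

/-- If a solution `h` of the transformed Jang equation on an interval `J ∋ 0`
with `h(0) = 0` satisfies `|h(s*)| = 1` for some `s* ∈ J`, then the solution of Jang's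
equation on `L_c` with initial conditions `f(-c/2) = f'(-c/2) = 0` is not global. -/
theorem transformed_blowup_implies_not_global (m c : ℝ) (hm : 0 < m)
    (hc : c ∈ Set.Ioo 0 (cCrit m))
    (R Rc : ℝ → ℝ)
    (hR : ∀ u, 0 < R u ∧ phi m (R u) = u * (u + c))
    (hRc : ∀ s, 0 < Rc s ∧ phi m (Rc s) = c^2/4 * (s^2 - 1))
    (J : Set ℝ) (hJconn : J.OrdConnected) (h0mem : (0:ℝ) ∈ J)
    (h : ℝ → ℝ)
    (hsol : ∀ s ∈ J, HasDerivWithinAt h (Fc m c s (Rc s) (h s)) J s)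
    (hinit : h 0 = 0)
    (hstar : ∃ s' ∈ J, |h s'| = 1) :
    ¬ ∃ (f f' : ℝ → ℝ),
        (∀ u, HasDerivAt f (f' u) u) ∧
        (∀ u, HasDerivAt f' (jangRHS m c u (R u) (f' u)) u) ∧
        f (-c/2) = 0 ∧ f' (-c/2) = 0 :=
  transformed_blowup_implies_not_global_general m c hm R Rc hR hRc J hJconn h0mem h hsol hinit hstar
end

section
/- Let c ∈ (0, c_crit) and set δ := √(e·m·(c_crit² - c²)). Then r_c(s) ≤ 2√2·m·|s| + δ for all s ∈ ℝ. -/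
open Real Set

noncomputable def psi (x : ℝ) : ℝ := exp x * (x - 1)

lemma hasDerivAt_psi (x : ℝ) : HasDerivAt psi (x * exp x) x := by
  have h := (hasDerivAt_exp x).mul ((hasDerivAt_id x).sub_const 1)
  exact h.congr_deriv (by simp only [id]; ring)

lemma psi_strictMonoOn : StrictMonoOn psi (Ici 0) := by
  refine strictMonoOn_of_deriv_pos (convex_Ici 0)
    (fun x _ => (hasDerivAt_psi x).continuousAt.continuousWithinAt) fun x hx => ?_
  rw [interior_Ici] at hx
  rw [(hasDerivAt_psi x).deriv]
  exact mul_pos hx (exp_pos x)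

lemma sq_div_two_sub_one_le_psi {x : ℝ} (hx : 0 ≤ x) : x ^ 2 / 2 - 1 ≤ psi x := by
  let g : ℝ → ℝ := fun y => psi y - y ^ 2 / 2
  have hg : ∀ y, HasDerivAt g (y * (exp y - 1)) y := fun y =>
    ((hasDerivAt_psi y).sub ((hasDerivAt_pow 2 y).div_const 2)).congr_deriv (by ring)
  have hmono : MonotoneOn g (Ici 0) := by
    refine monotoneOn_of_deriv_nonneg (convex_Ici 0)
      (fun y _ => (hg y).continuousAt.continuousWithinAt)
      (fun y _ => (hg y).differentiableAt.differentiableWithinAt) fun y hy => ?_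
    rw [interior_Ici] at hy
    rw [(hg y).deriv]
    exact mul_nonneg hy.le (sub_nonneg.mpr (one_le_exp hy.le))
  have h := hmono self_mem_Ici hx hx
  simp only [g, psi, exp_zero] at h ⊢
  linarith

lemma phi_eq_mul_psi {m : ℝ} (hm : m ≠ 0) (r : ℝ) :
    phi m r = 2 * m / exp 1 * psi (r / (2 * m)) := by
  rw [phi, psi, exp_sub]
  field_simp

lemma phi_strictMonoOn {m : ℝ} (hm : 0 < m) : StrictMonoOn (phi m) (Ici 0) := by
  intro r hr r' hr' hlt
  rw [phi_eq_mul_psi hm.ne', phi_eq_mul_psi hm.ne']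
  have hscale : 0 < 2 * m := by positivity
  exact mul_lt_mul_of_pos_left
    (psi_strictMonoOn (div_nonneg hr hscale.le) (div_nonneg hr' hscale.le)
      (div_lt_div_of_pos_right hlt hscale))
    (by positivity)

lemma mul_sq_sub_one_le_psi {d t : ℝ} (hd : 0 ≤ d) (ht : 0 ≤ t) :
    (1 - d ^ 2 / 2) * (t ^ 2 - 1) ≤ psi (√2 * t + d) := by
  have hquad := sq_div_two_sub_one_le_psi (by positivity : 0 ≤ √2 * t + d)
  have hsqrt : √2 ^ 2 = 2 := sq_sqrt zero_le_two
  -- the slack is `√2 t d + d² t² / 2 ≥ 0`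
  nlinarith [mul_nonneg (mul_nonneg (sqrt_nonneg 2) ht) hd, sq_nonneg (d * t)]

lemma mul_sq_sub_one_le_phi {m δ t : ℝ} (hm : 0 < m) (hδ : 0 ≤ δ) (ht : 0 ≤ t) :
    (2 * m / exp 1 - δ ^ 2 / (4 * m * exp 1)) * (t ^ 2 - 1) ≤ phi m (2 * √2 * m * t + δ) := by
  have hpsi := mul_sq_sub_one_le_psi (div_nonneg hδ (by positivity : (0 : ℝ) ≤ 2 * m)) ht
  have harg : (2 * √2 * m * t + δ) / (2 * m) = √2 * t + δ / (2 * m) := by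
    field_simp
  rw [phi_eq_mul_psi hm.ne', harg]
  calc (2 * m / exp 1 - δ ^ 2 / (4 * m * exp 1)) * (t ^ 2 - 1)
      = 2 * m / exp 1 * ((1 - (δ / (2 * m)) ^ 2 / 2) * (t ^ 2 - 1)) := by
        field_simp
        ring
    _ ≤ _ := mul_le_mul_of_nonneg_left hpsi (by positivity)

lemma cCrit_sq {m : ℝ} (hm : 0 ≤ m) : cCrit m ^ 2 = 8 * m / exp 1 :=
  sq_sqrt (by positivity)

/-- For `c ∈ (0, c_crit)` and `δ = √(em(c_crit² - c²))`, the radial function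
satisfies `r_c(s) ≤ 2√2·m·|s| + δ` for all `s`. -/
theorem rc_upper_bound (m c : ℝ) (hm : 0 < m) (hc : c ∈ Set.Ioo 0 (cCrit m))
    (Rc : ℝ → ℝ)
    (hRc : ∀ s, 0 < Rc s ∧ phi m (Rc s) = c^2/4 * (s^2 - 1)) (s : ℝ) :
    Rc s ≤ 2 * Real.sqrt 2 * m * |s| +
      Real.sqrt (Real.exp 1 * m * ((cCrit m)^2 - c^2)) := by
  set δ := √(exp 1 * m * (cCrit m ^ 2 - c ^ 2))
  obtain ⟨hrpos, hphi⟩ := hRc s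
  have hc_sq : c ^ 2 < cCrit m ^ 2 := pow_lt_pow_left₀ hc.2 hc.1.le two_ne_zero
  have hδ_sq : δ ^ 2 = exp 1 * m * (cCrit m ^ 2 - c ^ 2) :=
    sq_sqrt (by have := exp_pos 1; have := sub_pos.mpr hc_sq; positivity)
  have hcoef : c ^ 2 / 4 = 2 * m / exp 1 - δ ^ 2 / (4 * m * exp 1) := by
    rw [hδ_sq, cCrit_sq hm.le]
    field_simp
    ring
  have hle : phi m (Rc s) ≤ phi m (2 * √2 * m * |s| + δ) := by
    rw [hphi, ← sq_abs s, hcoef]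
    exact mul_sq_sub_one_le_phi hm (sqrt_nonneg _) (abs_nonneg s)
  exact (phi_strictMonoOn hm).le_iff_le hrpos.le (mem_Ici.mpr (by positivity)) |>.mp hle
end
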